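/- Let H = T_H ⋊ H₀ be a split, locally compact subgroup of Isom(𝔼ⁿ) with compact generating set S. Then there exist constants A > 0, B ≥ 0, C > 0 and D ≥ 0 (depending only on H and S) such that A·ℓ_S(t^λ w) − B ≤ ‖λ‖ ≤ C·ℓ_S(t^λ w) + D for all t^λ ∈ T_H and all w ∈ H₀, where ‖λ‖ denotes the Euclidean norm of λ ∈ ℝⁿ. -/

import Mathlib

noncomputable section

/-- Euclidean `n`-space. -/
abbrev En (n : ℕ) : Type := EuclideanSpace ℝ (Fin n)

/-- The orthogonal group of Euclidean `n`-space, realized as linear isometries. -/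
abbrev OrthGrp (n : ℕ) : Type := En n ≃ₗᵢ[ℝ] En n

/-- The action of the orthogonal group on the (multiplicatively written) translation group. -/
def rotAction (n : ℕ) : OrthGrp n →* MulAut (Multiplicative (En n)) where
  toFun A := AddEquiv.toMultiplicative A.toLinearEquiv.toAddEquiv
  map_one' := by ext x; rfl
  map_mul' A B := by ext x; rfl

/-- The isometry group `Isom(𝔼ⁿ) = T ⋊ O(n)`. -/
abbrev IsomE (n : ℕ) : Type :=
  SemidirectProduct (Multiplicative (En n)) (OrthGrp n) (rotAction n)

instance (n : ℕ) : TopologicalSpace (OrthGrp n) :=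
  TopologicalSpace.induced (fun A => (A : En n → En n)) inferInstance

instance (n : ℕ) : TopologicalSpace (IsomE n) :=
  TopologicalSpace.induced (fun g => (g.left, g.right)) inferInstance

/-- The translation subgroup `T` of `Isom(𝔼ⁿ)`. -/
def transSubgroup (n : ℕ) : Subgroup (IsomE n) := SemidirectProduct.inl.range

/-- The orthogonal subgroup `O(n)` of `Isom(𝔼ⁿ)`. -/
def sphSubgroup (n : ℕ) : Subgroup (IsomE n) := SemidirectProduct.inr.range

/-- A subgroup `H` of `Isom(𝔼ⁿ)` *splits* if `H = T_H ⋊ H₀`: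
the translation part and the spherical part of every element of `H` lie in `H`. -/
def Splits {n : ℕ} (H : Subgroup (IsomE n)) : Prop :=
  ∀ h ∈ H, SemidirectProduct.inl h.left ∈ H ∧ SemidirectProduct.inr h.right ∈ H

/-- The translation vector of an isometry. -/
def tPart {n : ℕ} (g : IsomE n) : En n := Multiplicative.toAdd g.left

/-- The lattice `L_H = {λ : t^λ ∈ T_H}` of translation vectors of `H`. -/
def latticeLH {n : ℕ} (H : Subgroup (IsomE n)) : Set (En n) :=
  {v | SemidirectProduct.inl (Multiplicative.ofAdd v) ∈ H}

/-- Word length with respect to a generating set `S` (symmetrized). -/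
def wordLength {G : Type*} [Group G] (S : Set G) (g : G) : ℕ :=
  sInf {k | ∃ l : List G, (∀ x ∈ l, x ∈ S ∨ x⁻¹ ∈ S) ∧ l.prod = g ∧ l.length = k}

/-- The conjugator length of a pair of elements. -/
def conjLength {G : Type*} [Group G] (S : Set G) (h h' : G) : ℕ :=
  sInf {m | ∃ k : G, k * h * k⁻¹ = h' ∧ wordLength S k = m}

/-- The conjugator length function. -/
def CLF {G : Type*} [Group G] (S : Set G) (m : ℕ) : ℕ :=
  sSup {l | ∃ h h' : G, IsConj h h' ∧ wordLength S h + wordLength S h' ≤ m ∧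
    conjLength S h h' = l}

/-- `g` quasi-dominates `f` via an increasing affine function. -/
def QuasiDom (f g : ℕ → ℕ) : Prop :=
  ∃ C D : ℕ, 0 < C ∧ ∀ m, f m ≤ C * g (C * m + D) + D

/-!
The translation part `g ↦ ‖tPart g‖` is a group seminorm on `Isom(𝔼ⁿ)`, so along a word in `S`
it grows by at most `max_S ‖tPart‖` per letter: this is the upper bound.

For the lower bound: a locally compact subgroup is closed, so the elements of `H` with bounded
translation part form a compact set, and by a Baire category argument the word length is bounded
on compact sets. Hence it is bounded on `H₀` and on bounded subsets of the lattice
`L_H = {λ | t^λ ∈ H}`. Choosing a basis of `span L_H` inside `L_H`, every `λ ∈ L_H` is an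
integer combination of the basis with coefficients `O(‖λ‖)` plus a bounded element of `L_H`
(integer and fractional parts of the coordinates), and subadditivity gives
`ℓ_S(t^λ) = O(‖λ‖ + 1)`.
-/

open Pointwise Topology

section WordLength

variable {G : Type*} [Group G] {S : Set G}

theorem wordLength_le_length {g : G} {l : List G} (hl : ∀ x ∈ l, x ∈ S ∨ x⁻¹ ∈ S)
    (hg : l.prod = g) : wordLength S g ≤ l.length :=
  Nat.sInf_le ⟨l, hl, hg, rfl⟩

theorem exists_list_length_eq_wordLength (hS : Subgroup.closure S = ⊤) (g : G) :
    ∃ l : List G, (∀ x ∈ l, x ∈ S ∨ x⁻¹ ∈ S) ∧ l.prod = g ∧ l.length = wordLength S g := by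
  have hg : g ∈ Submonoid.closure (S ∪ S⁻¹) := by
    rw [← Subgroup.closure_toSubmonoid, hS]; trivial
  obtain ⟨l, hl, hprod⟩ := Submonoid.exists_list_of_mem_closure hg
  exact Nat.sInf_mem
    (s := {k | ∃ l : List G, (∀ x ∈ l, x ∈ S ∨ x⁻¹ ∈ S) ∧ l.prod = g ∧ l.length = k})
    ⟨l.length, l, hl, hprod, rfl⟩

theorem wordLength_one : wordLength S (1 : G) = 0 :=
  Nat.le_zero.1 (wordLength_le_length (l := []) (by simp) rfl)

theorem wordLength_le_one {a : G} (ha : a ∈ S ∨ a⁻¹ ∈ S) : wordLength S a ≤ 1 :=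
  wordLength_le_length (l := [a]) (by simpa using ha) (by simp)

theorem wordLength_mul_le (hS : Subgroup.closure S = ⊤) (g h : G) :
    wordLength S (g * h) ≤ wordLength S g + wordLength S h := by
  obtain ⟨l₁, hl₁, rfl, hlen₁⟩ := exists_list_length_eq_wordLength hS g
  obtain ⟨l₂, hl₂, rfl, hlen₂⟩ := exists_list_length_eq_wordLength hS h
  rw [← hlen₁, ← hlen₂, ← List.length_append]
  refine wordLength_le_length (fun x hx => ?_) List.prod_append
  rcases List.mem_append.1 hx with hx | hx
  exacts [hl₁ x hx, hl₂ x hx]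

theorem wordLength_inv (hS : Subgroup.closure S = ⊤) (g : G) :
    wordLength S g⁻¹ = wordLength S g := by
  suffices h : ∀ g : G, wordLength S g⁻¹ ≤ wordLength S g from
    le_antisymm (h g) (by simpa using h g⁻¹)
  intro g
  obtain ⟨l, hl, rfl, hlen⟩ := exists_list_length_eq_wordLength hS g
  rw [← hlen, ← List.length_map (f := (·⁻¹)), ← List.length_reverse]
  refine wordLength_le_length (fun x hx => ?_) (List.prod_inv_reverse l).symm
  obtain ⟨y, hy, rfl⟩ := List.mem_map.1 (List.mem_reverse.1 hx)
  simpa [or_comm] using hl y hy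

theorem wordLength_le_of_mem_pow (hS : Subgroup.closure S = ⊤) {g : G} {k : ℕ}
    (hg : g ∈ (S ∪ S⁻¹ ∪ {1}) ^ k) : wordLength S g ≤ k := by
  induction k generalizing g with
  | zero => simp_all [wordLength_one]
  | succ k ih =>
    obtain ⟨a, ha, b, hb, rfl⟩ := (pow_succ' (S ∪ S⁻¹ ∪ {1}) k ▸ hg :)
    have ha' : wordLength S a ≤ 1 := by
      rcases ha with (ha | ha) | rfl
      exacts [wordLength_le_one (.inl ha), wordLength_le_one (.inr ha), by simp [wordLength_one]]
    linarith [wordLength_mul_le hS a b, ih hb]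

theorem list_prod_mem_pow_length {l : List G} (hl : ∀ x ∈ l, x ∈ S ∨ x⁻¹ ∈ S) :
    l.prod ∈ (S ∪ S⁻¹ ∪ {1}) ^ l.length := by
  induction l with
  | nil => simp
  | cons a l ih =>
    rw [List.prod_cons, List.length_cons, pow_succ']
    refine Set.mul_mem_mul ?_ (ih fun x hx => hl x (List.mem_cons_of_mem a hx))
    exact Or.inl (hl a List.mem_cons_self)

theorem setOf_wordLength_le_eq_pow (hS : Subgroup.closure S = ⊤) (k : ℕ) :
    {g | wordLength S g ≤ k} = (S ∪ S⁻¹ ∪ {1}) ^ k := by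
  refine Set.Subset.antisymm (fun g hg => ?_) fun g hg => wordLength_le_of_mem_pow hS hg
  obtain ⟨l, hl, hprod, hlen⟩ := exists_list_length_eq_wordLength hS g
  have hmem := list_prod_mem_pow_length hl
  rw [hprod, hlen] at hmem
  exact Set.pow_subset_pow_right (s := S ∪ S⁻¹ ∪ {1}) (Or.inr rfl) hg hmem

theorem GroupSeminorm.le_mul_wordLength (q : GroupSeminorm G) (hS : Subgroup.closure S = ⊤)
    {M : ℝ} (hM : ∀ s ∈ S, q s ≤ M) (g : G) : q g ≤ M * wordLength S g := by
  obtain ⟨l, hl, rfl, hlen⟩ := exists_list_length_eq_wordLength hS g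
  rw [← hlen]
  clear hlen
  induction l with
  | nil => simp
  | cons a l ih =>
    have ha : q a ≤ M := by
      rcases hl a List.mem_cons_self with ha | ha
      exacts [hM a ha, map_inv_eq_map q a ▸ hM _ ha]
    have := ih (fun x hx => hl x (List.mem_cons_of_mem a hx))
    rw [List.prod_cons, List.length_cons, Nat.cast_succ]
    linarith [map_mul_le_add q a l.prod]

end WordLength

theorem IsCompact.pow {M : Type*} [Monoid M] [TopologicalSpace M] [ContinuousMul M] {s : Set M}
    (hs : IsCompact s) (k : ℕ) : IsCompact (s ^ k) := by
  induction k with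
  | zero => simp
  | succ k ih => rw [pow_succ]; exact ih.mul hs

section WordLengthTopology

variable {G : Type*} [Group G] [TopologicalSpace G] [IsTopologicalGroup G] {S : Set G}

theorem isCompact_setOf_wordLength_le (hSc : IsCompact S) (hS : Subgroup.closure S = ⊤)
    (k : ℕ) : IsCompact {g | wordLength S g ≤ k} := by
  rw [setOf_wordLength_le_eq_pow hS]
  exact ((hSc.union hSc.inv).union isCompact_singleton).pow k

theorem exists_wordLength_le_of_isCompact [T2Space G] [LocallyCompactSpace G]
    (hSc : IsCompact S) (hS : Subgroup.closure S = ⊤) {K : Set G} (hK : IsCompact K) :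
    ∃ N, ∀ g ∈ K, wordLength S g ≤ N := by
  obtain ⟨k, hk⟩ := nonempty_interior_of_iUnion_of_closed
    (fun k => (isCompact_setOf_wordLength_le hSc hS k).isClosed)
    (Set.eq_univ_of_forall fun g => Set.mem_iUnion.2 ⟨wordLength S g, le_rfl (a := wordLength S g)⟩)
  obtain ⟨t, ht⟩ := compact_covered_by_mul_left_translates hK hk
  refine ⟨t.sup (wordLength S ·⁻¹) + k, fun g hg => ?_⟩
  obtain ⟨x, hxt, hxg⟩ := Set.mem_iUnion₂.1 (ht hg)
  calc wordLength S g = wordLength S (x⁻¹ * (x * g)) := by rw [inv_mul_cancel_left]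
    _ ≤ wordLength S x⁻¹ + wordLength S (x * g) := wordLength_mul_le hS _ _
    _ ≤ t.sup (wordLength S ·⁻¹) + k :=
      add_le_add (Finset.le_sup (f := (wordLength S ·⁻¹)) hxt) hxg

end WordLengthTopology

theorem Subgroup.isClosed_of_locallyCompactSpace {G : Type*} [Group G] [TopologicalSpace G]
    [IsTopologicalGroup G] [T2Space G] (H : Subgroup G) [LocallyCompactSpace H] :
    IsClosed (H : Set G) := by
  obtain ⟨K, hKc, hK⟩ := exists_compact_mem_nhds (1 : H)
  obtain ⟨U, hU, hUK⟩ := (mem_nhds_subtype (H : Set G) 1 K).1 hK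
  obtain ⟨V, hV, hVU⟩ := exists_nhds_split_inv hU
  refine closure_subset_iff_isClosed.1 fun x hx => ?_
  set N := (· * x⁻¹) ⁻¹' interior V
  have hNo : IsOpen N := isOpen_interior.preimage (continuous_mul_const _)
  have hxN : x ∈ N := by simpa [N, mem_interior_iff_mem_nhds] using hV
  obtain ⟨h₀, hh₀N, hh₀H⟩ := mem_closure_iff.1 hx N hNo hxN
  have hsub : N ∩ H ⊆ (· * h₀) '' (Subtype.val '' K) := by
    rintro y ⟨hyN, hyH⟩
    have hy : y * h₀⁻¹ ∈ U := by
      simpa [div_eq_mul_inv, mul_assoc] using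
        hVU _ (interior_subset hyN) _ (interior_subset hh₀N)
    exact ⟨y * h₀⁻¹, ⟨⟨_, mul_mem hyH (inv_mem hh₀H)⟩, hUK hy, rfl⟩, inv_mul_cancel_right y h₀⟩
  have hC : IsClosed ((· * h₀) '' (Subtype.val '' K)) :=
    ((hKc.image continuous_subtype_val).image (continuous_mul_const h₀)).isClosed
  obtain ⟨_, ⟨k, -, rfl⟩, rfl⟩ :=
    closure_minimal hsub hC (hNo.inter_closure ⟨hxN, hx⟩)
  exact mul_mem k.2 hh₀H

theorem Int.abs_floor_le_abs_add_one {α : Type*} [Ring α] [LinearOrder α] [IsStrictOrderedRing α]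
    [FloorRing α] (c : α) : |(⌊c⌋ : α)| ≤ |c| + 1 :=
  calc |(⌊c⌋ : α)| = |c - Int.fract c| := by rw [Int.self_sub_fract]
    _ ≤ |c| + |Int.fract c| := abs_sub _ _
    _ ≤ |c| + 1 := by
      rw [abs_of_nonneg (Int.fract_nonneg c)]
      exact add_le_add_right (Int.fract_lt_one c).le _

theorem AddGroupSeminorm.map_zsmul_le {G : Type*} [AddGroup G] (p : AddGroupSeminorm G) (m : ℤ)
    (x : G) : p (m • x) ≤ |(m : ℝ)| * p x := by
  have hnat : ∀ k : ℕ, p (k • x) ≤ k * p x := by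
    intro k
    induction k with
    | zero => simp
    | succ k ih => rw [succ_nsmul, Nat.cast_succ]; linarith [map_add_le_add p (k • x) x]
  obtain ⟨k, rfl | rfl⟩ := Int.eq_nat_or_neg m <;> simpa using hnat k

section Coarse

variable {E : Type*} [NormedAddCommGroup E] [NormedSpace ℝ E] [FiniteDimensional ℝ E]

theorem AddSubgroup.exists_near_int_combination (L : AddSubgroup E) :
    ∃ (k : ℕ) (e : Fin k → L) (R K : ℝ), 0 ≤ K ∧ ∀ x : L, ∃ m : Fin k → ℤ,
      ‖x - ∑ i, m i • e i‖ ≤ R ∧ ∀ i, |(m i : ℝ)| ≤ K * ‖x‖ + 1 := by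
  obtain ⟨κ, a, -, hspan, hli⟩ := exists_linearIndependent' ℝ L.subtype
  have : Finite κ := hli.finite
  have : Fintype κ := .ofFinite κ
  set σ := Fintype.equivFin κ
  set B := (Module.Basis.span hli).reindex σ
  set e : Fin _ → L := a ∘ σ.symm
  have hB : ∀ i, (B i : E) = e i := fun i => by
    rw [Module.Basis.reindex_apply, Module.Basis.coe_span_apply]; rfl
  have hmem : ∀ x : L, (x : E) ∈ Submodule.span ℝ (Set.range (L.subtype ∘ a)) := fun x => by
    rw [hspan]; exact Submodule.subset_span ⟨x, rfl⟩
  set T := B.equivFunL.toContinuousLinearMap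
  refine ⟨_, e, ∑ i, ‖e i‖, ‖T‖, T.opNorm_nonneg, fun x => ?_⟩
  set c := B.repr ⟨x, hmem x⟩
  have hx : (x : E) = ∑ i, c i • (e i : E) := by
    have := congrArg Subtype.val (B.sum_repr ⟨x, hmem x⟩)
    simp only [Submodule.coe_sum, Submodule.coe_smul, hB] at this
    exact this.symm
  refine ⟨fun i => ⌊c i⌋, ?_, fun i => ?_⟩
  · calc ‖x - ∑ i, ⌊c i⌋ • e i‖ = ‖∑ i, Int.fract (c i) • (e i : E)‖ := by
          rw [AddSubgroup.coe_norm]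
          push_cast
          simp only [hx, Int.fract, sub_smul, Finset.sum_sub_distrib, Int.cast_smul_eq_zsmul]
      _ ≤ ∑ i, ‖e i‖ := by
          refine (norm_sum_le _ _).trans (Finset.sum_le_sum fun i _ => ?_)
          rw [norm_smul, Real.norm_of_nonneg (Int.fract_nonneg _)]
          exact mul_le_of_le_one_left (norm_nonneg _) (Int.fract_lt_one _).le
  · calc |(⌊c i⌋ : ℝ)| ≤ |c i| + 1 := Int.abs_floor_le_abs_add_one _
      _ ≤ ‖T‖ * ‖x‖ + 1 := by
          gcongr
          exact (norm_le_pi_norm (T ⟨x, hmem x⟩) i).trans (T.le_opNorm _)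

theorem AddGroupSeminorm.exists_le_mul_norm_add {L : AddSubgroup E} (p : AddGroupSeminorm L)
    (hp : ∀ R, ∃ M, ∀ x : L, ‖x‖ ≤ R → p x ≤ M) :
    ∃ C, 0 ≤ C ∧ ∀ x : L, p x ≤ C * ‖x‖ + C := by
  obtain ⟨k, e, R, K, hK, he⟩ := L.exists_near_int_combination
  obtain ⟨M, hM⟩ := hp R
  set Q := ∑ i, p (e i)
  have hQ : 0 ≤ Q := Finset.sum_nonneg fun i _ => apply_nonneg p (e i)
  refine ⟨|M| + Q + K * Q, by positivity, fun x => ?_⟩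
  obtain ⟨m, hnear, hm⟩ := he x
  have hsum : p (∑ i, m i • e i) ≤ (K * ‖x‖ + 1) * Q := by
    refine (Finset.le_sum_of_subadditive p (map_zero p).le (map_add_le_add p) _ _).trans ?_
    rw [Finset.mul_sum]
    exact Finset.sum_le_sum fun i hi => (p.map_zsmul_le _ _).trans
      (mul_le_mul_of_nonneg_right (hm i) (apply_nonneg p _))
  calc p x = p ((x - ∑ i, m i • e i) + ∑ i, m i • e i) := by rw [sub_add_cancel]
    _ ≤ M + (K * ‖x‖ + 1) * Q := (map_add_le_add p _ _).trans (add_le_add (hM _ hnear) hsum)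
    _ ≤ (|M| + Q + K * Q) * ‖x‖ + (|M| + Q + K * Q) := by
      nlinarith [norm_nonneg x, mul_nonneg hK hQ, le_abs_self M, abs_nonneg M]

end Coarse

namespace OrthGrp

variable {n : ℕ}

theorem isEmbedding_coe : IsEmbedding (fun A : OrthGrp n => (A : En n → En n)) :=
  ⟨.induced _, LinearIsometryEquiv.coe_injective⟩

theorem continuous_apply (x : En n) : Continuous fun A : OrthGrp n => A x :=
  (_root_.continuous_apply x).comp isEmbedding_coe.continuous

theorem continuous_eval : Continuous fun p : OrthGrp n × En n => p.1 p.2 :=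
  continuous_prod_of_continuous_lipschitzWith' _ 1 (fun A => A.lipschitz) continuous_apply

instance : ContinuousMul (OrthGrp n) :=
  ⟨continuous_induced_rng.2 <| continuous_pi fun x =>
    continuous_eval.comp (continuous_fst.prodMk ((continuous_apply x).comp continuous_snd))⟩

instance : ContinuousInv (OrthGrp n) := by
  refine ⟨continuous_induced_rng.2 <| continuous_pi fun x => ?_⟩
  change Continuous fun A : OrthGrp n => A⁻¹ x
  refine continuous_iff_continuousAt.2 fun A₀ => tendsto_iff_dist_tendsto_zero.2 ?_
  have h : ∀ A : OrthGrp n, dist (A⁻¹ x) (A₀⁻¹ x) = dist x (A (A₀⁻¹ x)) := fun A => by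
    rw [← A.dist_map, show A (A⁻¹ x) = x from A.apply_symm_apply x]
  simp only [h]
  simpa using ((continuous_const (y := x)).dist (continuous_apply (A₀⁻¹ x))).tendsto A₀

instance : IsTopologicalGroup (OrthGrp n) where

instance : T2Space (OrthGrp n) := isEmbedding_coe.t2Space

theorem range_coe : Set.range (fun A : OrthGrp n => (A : En n → En n)) =
    Set.range ((↑) : (En n →ₗ[ℝ] En n) → En n → En n) ∩ {f | ∀ x, ‖f x‖ = ‖x‖} := by
  refine Set.Subset.antisymm ?_ ?_
  · rintro _ ⟨A, rfl⟩
    exact ⟨⟨A.toLinearEquiv, rfl⟩, A.norm_map⟩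
  · rintro _ ⟨⟨f, rfl⟩, hf⟩
    exact ⟨LinearIsometry.toLinearIsometryEquiv ⟨f, hf⟩ rfl, rfl⟩

instance : CompactSpace (OrthGrp n) := by
  refine ⟨isEmbedding_coe.isCompact_iff.2 ?_⟩
  rw [Set.image_univ, range_coe]
  refine (isCompact_univ_pi fun x => isCompact_closedBall (0 : En n) ‖x‖).of_isClosed_subset
    ((LinearMap.isClosed_range_coe _ _ _).inter ?_) fun f ⟨_, hf⟩ x _ => by simp [hf x]
  simp only [Set.ofPred_forall]
  exact isClosed_iInter fun x => isClosed_eq (continuous_norm.comp (_root_.continuous_apply x))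
    continuous_const

end OrthGrp

namespace IsomE

variable {n : ℕ}

def homeomorphProd : IsomE n ≃ₜ Multiplicative (En n) × OrthGrp n :=
  SemidirectProduct.equivProd.toHomeomorphOfIsInducing (.induced _)

theorem continuous_left : Continuous fun g : IsomE n => g.left :=
  continuous_fst.comp homeomorphProd.continuous

theorem continuous_right : Continuous fun g : IsomE n => g.right :=
  continuous_snd.comp homeomorphProd.continuous

theorem continuous_rotAction :
    Continuous fun p : OrthGrp n × Multiplicative (En n) => rotAction n p.1 p.2 :=
  continuous_ofAdd.comp (OrthGrp.continuous_eval.comp (continuous_fst.prodMk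
    (continuous_toAdd.comp continuous_snd)))

instance : ContinuousMul (IsomE n) :=
  ⟨homeomorphProd.symm.continuous.comp <|
    (((continuous_left.comp continuous_fst).mul (continuous_rotAction.comp
      ((continuous_right.comp continuous_fst).prodMk (continuous_left.comp continuous_snd)))).prodMk
      ((continuous_right.comp continuous_fst).mul (continuous_right.comp continuous_snd)))⟩

instance : ContinuousInv (IsomE n) :=
  ⟨homeomorphProd.symm.continuous.comp <|
    (continuous_rotAction.comp (continuous_right.inv.prodMk continuous_left.inv)).prodMk
      continuous_right.inv⟩

instance : IsTopologicalGroup (IsomE n) where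

instance : T2Space (IsomE n) := homeomorphProd.symm.t2Space

theorem tPart_mul (g h : IsomE n) : tPart (g * h) = tPart g + g.right (tPart h) := rfl

theorem tPart_inv (g : IsomE n) : tPart g⁻¹ = g.right⁻¹ (-tPart g) := rfl

theorem continuous_tPart : Continuous (tPart : IsomE n → En n) :=
  continuous_toAdd.comp continuous_left

variable (n) in
def tPartSeminorm : GroupSeminorm (IsomE n) where
  toFun g := ‖tPart g‖
  map_one' := norm_zero
  mul_le' g h := by
    rw [tPart_mul, ← g.right.norm_map (tPart h)]
    exact norm_add_le _ _
  inv' g := by simp only [tPart_inv, LinearIsometryEquiv.norm_map, norm_neg]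

@[simp]
theorem tPartSeminorm_apply (g : IsomE n) : tPartSeminorm n g = ‖tPart g‖ := rfl

theorem tPart_inl_mul_inr (v : En n) (A : OrthGrp n) :
    tPart (SemidirectProduct.inl (Multiplicative.ofAdd v) * SemidirectProduct.inr A) = v := by
  simp [tPart]

theorem isCompact_setOf_norm_tPart_le (R : ℝ) : IsCompact {g : IsomE n | ‖tPart g‖ ≤ R} := by
  convert homeomorphProd.isCompact_preimage.2
    (((isCompact_closedBall (0 : En n) R).image continuous_ofAdd).prod isCompact_univ) using 1
  ext g
  change ‖tPart g‖ ≤ R ↔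
    g.left ∈ Multiplicative.ofAdd '' Metric.closedBall 0 R ∧ g.right ∈ Set.univ
  simp [tPart]

end IsomE

section Lattice

variable {n : ℕ} (H : Subgroup (IsomE n))

def translationLattice : AddSubgroup (En n) where
  carrier := latticeLH H
  add_mem' {v w} hv hw := by
    simpa only [latticeLH, Set.mem_ofPred_eq, ofAdd_add, map_mul] using mul_mem hv hw
  zero_mem' := by simp [latticeLH]
  neg_mem' {v} hv := by
    simpa only [latticeLH, Set.mem_ofPred_eq, ofAdd_neg, map_inv] using inv_mem hv

def translationHom : Multiplicative (translationLattice H) →* H where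
  toFun v := ⟨SemidirectProduct.inl (Multiplicative.ofAdd (v.toAdd : En n)), v.toAdd.2⟩
  map_one' := Subtype.ext (by simp)
  map_mul' v w := Subtype.ext (by simp)

variable {H} in
def translationWordLength {S : Set H} (hS : Subgroup.closure S = ⊤) :
    AddGroupSeminorm (translationLattice H) where
  toFun v := wordLength S (translationHom H (.ofAdd v))
  map_zero' := by simp [wordLength_one]
  add_le' v w := by
    simpa only [ofAdd_add, map_mul, Nat.cast_add] using
      (Nat.cast_le (α := ℝ)).2 (wordLength_mul_le hS _ _)
  neg' v := by simp only [ofAdd_neg, map_inv, wordLength_inv hS]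

end Lattice

theorem wordlength_vs_translation_norm_general (n : ℕ) (H : Subgroup (IsomE n))
    (hlc : LocallyCompactSpace ↥H)
    (S : Set ↥H) (hScpt : IsCompact S) (hSgen : Subgroup.closure S = ⊤) :
    ∃ A B C D : ℝ, 0 < A ∧ 0 ≤ B ∧ 0 < C ∧ 0 ≤ D ∧
      ∀ (lam : En n) (hlam : SemidirectProduct.inl (Multiplicative.ofAdd lam) ∈ H)
        (w : OrthGrp n) (hw : SemidirectProduct.inr w ∈ H),
        A * (wordLength S ⟨SemidirectProduct.inl (Multiplicative.ofAdd lam) *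
              SemidirectProduct.inr w, mul_mem hlam hw⟩ : ℝ) - B ≤ ‖lam‖ ∧
          ‖lam‖ ≤ C * (wordLength S ⟨SemidirectProduct.inl (Multiplicative.ofAdd lam) *
              SemidirectProduct.inr w, mul_mem hlam hw⟩ : ℝ) + D := by
  have hball : ∀ R, ∃ N : ℕ, ∀ h : H, ‖tPart (h : IsomE n)‖ ≤ R → wordLength S h ≤ N :=
    fun R => exists_wordLength_le_of_isCompact hScpt hSgen <|
      H.isClosed_of_locallyCompactSpace.isClosedEmbedding_subtypeVal.isCompact_preimage
        (IsomE.isCompact_setOf_norm_tPart_le R)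
  obtain ⟨N, hN⟩ := hball 0
  obtain ⟨C, hC0, hC⟩ := (translationWordLength hSgen).exists_le_mul_norm_add fun R =>
    let ⟨N, hN⟩ := hball R; ⟨N, fun v hv => Nat.cast_le.2 (hN _ hv)⟩
  obtain ⟨M, hM⟩ := hScpt.bddAbove_image
    (IsomE.continuous_tPart.norm.comp continuous_subtype_val).continuousOn
  have hM' : ∀ s ∈ S, (IsomE.tPartSeminorm n).comp H.subtype s ≤ |M| :=
    fun s hs => (le_abs_self M).trans' (hM ⟨s, hs, rfl⟩)
  refine ⟨(C + 1)⁻¹, C + N, |M| + 1, 0, by positivity, by positivity, by positivity, le_rfl,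
    fun lam hlam w hw => ⟨?_, ?_⟩⟩
  · have hlen : (wordLength S ⟨_, mul_mem hlam hw⟩ : ℝ) ≤ C * ‖lam‖ + C + N :=
      calc (wordLength S ⟨_, mul_mem hlam hw⟩ : ℝ)
          ≤ wordLength S (translationHom H (.ofAdd ⟨lam, hlam⟩)) + wordLength S ⟨_, hw⟩ := by
            exact_mod_cast
              wordLength_mul_le hSgen (translationHom H (.ofAdd ⟨lam, hlam⟩)) ⟨_, hw⟩
        _ ≤ C * ‖lam‖ + C + N :=
            add_le_add (hC ⟨lam, hlam⟩) (by exact_mod_cast hN _ (by simp [tPart]))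
    rw [sub_le_iff_le_add, inv_mul_le_iff₀ (by positivity)]
    nlinarith [norm_nonneg lam, mul_nonneg hC0 (Nat.cast_nonneg (α := ℝ) N)]
  · have := ((IsomE.tPartSeminorm n).comp H.subtype).le_mul_wordLength hSgen hM'
      ⟨_, mul_mem hlam hw⟩
    simp only [GroupSeminorm.comp_apply, Subgroup.coe_subtype, IsomE.tPartSeminorm_apply,
      IsomE.tPart_inl_mul_inr] at this
    linarith [Nat.cast_nonneg (α := ℝ) (wordLength S ⟨_, mul_mem hlam hw⟩)]

/-- **Comparison of word length and translation norm.**  Let `H = T_H ⋊ H₀` be a split,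
locally compact subgroup of `Isom(𝔼ⁿ)` with compact generating set `S`.  Then there are
constants `A > 0`, `B ≥ 0`, `C > 0`, `D ≥ 0` (depending only on `H` and `S`) with
`A·ℓ_S(t^λ w) − B ≤ ‖λ‖ ≤ C·ℓ_S(t^λ w) + D` for all `t^λ ∈ T_H` and `w ∈ H₀`. -/
theorem wordlength_vs_translation_norm (n : ℕ) (H : Subgroup (IsomE n))
    (hsplit : Splits H) (hlc : LocallyCompactSpace ↥H)
    (S : Set ↥H) (hScpt : IsCompact S) (hSgen : Subgroup.closure S = ⊤) :
    ∃ A B C D : ℝ, 0 < A ∧ 0 ≤ B ∧ 0 < C ∧ 0 ≤ D ∧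
      ∀ (lam : En n) (hlam : SemidirectProduct.inl (Multiplicative.ofAdd lam) ∈ H)
        (w : OrthGrp n) (hw : SemidirectProduct.inr w ∈ H),
        A * (wordLength S ⟨SemidirectProduct.inl (Multiplicative.ofAdd lam) *
              SemidirectProduct.inr w, mul_mem hlam hw⟩ : ℝ) - B ≤ ‖lam‖ ∧
          ‖lam‖ ≤ C * (wordLength S ⟨SemidirectProduct.inl (Multiplicative.ofAdd lam) *
              SemidirectProduct.inr w, mul_mem hlam hw⟩ : ℝ) + D :=
  wordlength_vs_translation_norm_general n H hlc S hScpt hSgen
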